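/- Let T > 0 and let β, γ ≥ 0 be reals with β + γ > 0. Then there exists a unique function μ : [0, T] → [0, ∞) such that μ is continuous on [0, T], strictly increasing, μ(0) = 0, μ(s) > 0 for s ∈ (0, T], μ is differentiable on (0, T], and μ′(s) = γ²/(2·μ(s)) + (√2/2)·β for every s ∈ (0, T]. Moreover, if γ > 0, then the function s ↦ 1/μ(s) is Lebesgue integrable on (0, T], i.e. ∫₀ᵀ ds/μ(s) < +∞. -/

import Mathlib

open MeasureTheory

/-- A function `μ` is a solution of the singular ODE (3.6)/(3.8) on `[0, T]`:
continuous on `[0, T]`, strictly increasing there, `μ(0) = 0`, nonnegative, positive on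
`(0, T]`, and satisfying `μ′(s) = γ²/(2μ(s)) + (√2/2)β` on `(0, T]`. -/
def IsSolODE (T β γ : ℝ) (μ : ℝ → ℝ) : Prop :=
  ContinuousOn μ (Set.Icc 0 T) ∧ StrictMonoOn μ (Set.Icc 0 T) ∧ μ 0 = 0 ∧
    (∀ s ∈ Set.Icc 0 T, 0 ≤ μ s) ∧ (∀ s ∈ Set.Ioc 0 T, 0 < μ s) ∧
    ∀ s ∈ Set.Ioc 0 T, HasDerivWithinAt μ (γ ^ 2 / (2 * μ s) + Real.sqrt 2 / 2 * β)
      (Set.Icc 0 T) s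

/-!
Existence for `γ > 0` is by separation of variables: with `a = γ²/2` and `c = (√2/2)β` the
equation reads `μ′ = (a + cμ)/μ`, so a solution is the inverse of the level-time function
`G(m) = ∫₀^m u/(a + cu) du`. For `γ = 0` the solution is linear.

Uniqueness holds because the vector field `m ↦ γ²/(2m) + (√2/2)β` is decreasing on `(0, ∞)`:
the squared difference of two solutions then has nonpositive derivative and vanishes at `0`.

The integral of `1/μ` is finite since `μ² - γ²s` has derivative `√2 βμ ≥ 0`, whence
`μ(s) ≥ γ√s`.
-/

open Set Filter intervalIntegral

section LevelTime

variable {a c : ℝ}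

/-- Odd extension of `u ↦ u/(a + cu)`, the reciprocal of the vector field `u ↦ a/u + c`;
it makes `levelTime a c` an order isomorphism of `ℝ`. -/
noncomputable def invField (a c u : ℝ) : ℝ := |u| / (a + c * |u|)

noncomputable def levelTime (a c m : ℝ) : ℝ := ∫ u in 0..m, invField a c u

lemma continuous_invField (ha : 0 < a) (hc : 0 ≤ c) : Continuous (invField a c) :=
  continuous_abs.div (by fun_prop) fun u => by positivity

lemma invField_pos (ha : 0 < a) (hc : 0 ≤ c) {u : ℝ} (hu : u ≠ 0) : 0 < invField a c u :=
  div_pos (abs_pos.2 hu) (by positivity)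

lemma invField_of_nonneg {u : ℝ} (hu : 0 ≤ u) : invField a c u = u / (a + c * u) := by
  rw [invField, abs_of_nonneg hu]

lemma hasDerivAt_levelTime (ha : 0 < a) (hc : 0 ≤ c) (m : ℝ) :
    HasDerivAt (levelTime a c) (invField a c m) m :=
  (continuous_invField ha hc).integral_hasStrictDerivAt 0 m |>.hasDerivAt

lemma continuous_levelTime (ha : 0 < a) (hc : 0 ≤ c) : Continuous (levelTime a c) :=
  continuous_iff_continuousAt.2 fun m => (hasDerivAt_levelTime ha hc m).continuousAt

lemma levelTime_zero : levelTime a c 0 = 0 := integral_same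

lemma levelTime_neg (m : ℝ) : levelTime a c (-m) = -levelTime a c m := by
  have heven : ∀ u, invField a c (-u) = invField a c u := fun u => by simp [invField]
  have := integral_comp_neg (a := 0) (b := m) (invField a c)
  simp only [heven, neg_zero] at this
  rw [levelTime, levelTime, integral_symm, ← this]

lemma strictMono_levelTime (ha : 0 < a) (hc : 0 ≤ c) : StrictMono (levelTime a c) := by
  have hderiv : ∀ (D : Set ℝ) (x : ℝ), HasDerivWithinAt (levelTime a c) (invField a c x) D x :=
    fun D x => (hasDerivAt_levelTime ha hc x).hasDerivWithinAt
  refine StrictMonoOn.Iic_union_Ici (a := 0)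
    (strictMonoOn_of_hasDerivWithinAt_pos (convex_Iic 0) (continuous_levelTime ha hc).continuousOn
      (fun x _ => hderiv _ x) fun x hx => invField_pos ha hc ?_)
    (strictMonoOn_of_hasDerivWithinAt_pos (convex_Ici 0) (continuous_levelTime ha hc).continuousOn
      (fun x _ => hderiv _ x) fun x hx => invField_pos ha hc ?_)
  · rw [interior_Iic] at hx
    exact hx.ne
  · rw [interior_Ici] at hx
    exact hx.ne'

lemma le_levelTime (ha : 0 < a) (hc : 0 ≤ c) {m : ℝ} (hm : 1 ≤ m) :
    (m - 1) / (a + c) ≤ levelTime a c m := by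
  have hint : ∀ x y : ℝ, IntervalIntegrable (invField a c) volume x y :=
    (continuous_invField ha hc).intervalIntegrable
  have hbound : ∀ u ∈ Icc 1 m, 1 / (a + c) ≤ invField a c u := fun u hu => by
    rw [invField_of_nonneg (by linarith [hu.1]),
      div_le_div_iff₀ (by positivity) (by nlinarith [hu.1])]
    nlinarith [hu.1]
  have hhead : 0 ≤ ∫ u in (0 : ℝ)..1, invField a c u :=
    integral_nonneg zero_le_one fun u _ => div_nonneg (abs_nonneg u) (by positivity)
  have htail : (m - 1) / (a + c) ≤ ∫ u in (1 : ℝ)..m, invField a c u := by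
    simpa [div_eq_mul_inv] using integral_mono_on hm intervalIntegrable_const (hint 1 m) hbound
  rw [levelTime, ← integral_add_adjacent_intervals (hint 0 1) (hint 1 m)]
  linarith

lemma tendsto_levelTime_atTop (ha : 0 < a) (hc : 0 ≤ c) :
    Tendsto (levelTime a c) atTop atTop :=
  tendsto_atTop_mono' atTop ((eventually_ge_atTop 1).mono fun _ => le_levelTime ha hc)
    ((tendsto_atTop_add_const_right atTop (-1) tendsto_id).atTop_div_const (by positivity))

lemma tendsto_levelTime_atBot (ha : 0 < a) (hc : 0 ≤ c) :
    Tendsto (levelTime a c) atBot atBot := by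
  have := (tendsto_neg_atTop_atBot.comp (tendsto_levelTime_atTop ha hc)).comp
    tendsto_neg_atBot_atTop
  simpa [Function.comp_def, levelTime_neg] using this

lemma surjective_levelTime (ha : 0 < a) (hc : 0 ≤ c) : Function.Surjective (levelTime a c) :=
  (continuous_levelTime ha hc).surjective (tendsto_levelTime_atTop ha hc)
    (tendsto_levelTime_atBot ha hc)

end LevelTime

section Uniqueness

variable {f : ℝ → ℝ} {S : Set ℝ} {a b : ℝ} {x y : ℝ → ℝ}

lemma mul_sub_nonpos_of_antitoneOn (hf : AntitoneOn f S) {u v : ℝ} (hu : u ∈ S) (hv : v ∈ S) :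
    (u - v) * (f u - f v) ≤ 0 := by
  rcases le_total u v with huv | hvu
  · exact mul_nonpos_of_nonpos_of_nonneg (sub_nonpos.2 huv) (sub_nonneg.2 (hf hu hv huv))
  · exact mul_nonpos_of_nonneg_of_nonpos (sub_nonneg.2 hvu) (sub_nonpos.2 (hf hv hu hvu))

theorem eqOn_Icc_of_hasDerivWithinAt_of_antitoneOn (hf : AntitoneOn f S)
    (hx : ContinuousOn x (Icc a b)) (hy : ContinuousOn y (Icc a b)) (hxy : x a = y a)
    (hxS : ∀ t ∈ Ioo a b, x t ∈ S) (hyS : ∀ t ∈ Ioo a b, y t ∈ S)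
    (hx' : ∀ t ∈ Ioo a b, HasDerivWithinAt x (f (x t)) (Ioo a b) t)
    (hy' : ∀ t ∈ Ioo a b, HasDerivWithinAt y (f (y t)) (Ioo a b) t) :
    EqOn x y (Icc a b) := by
  have hanti : AntitoneOn (fun t => (x t - y t) ^ 2) (Icc a b) := by
    refine antitoneOn_of_hasDerivWithinAt_nonpos (convex_Icc a b) ((hx.sub hy).pow 2)
      (f' := fun t => 2 * ((x t - y t) * (f (x t) - f (y t)))) (fun t ht => ?_) fun t ht => ?_
    all_goals simp only [interior_Icc] at ht ⊢
    · exact (((hx' t ht).sub (hy' t ht)).pow 2).congr_deriv (by norm_num; ring)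
    · nlinarith [mul_sub_nonpos_of_antitoneOn hf (hxS t ht) (hyS t ht)]
  intro t ht
  have := hanti ⟨le_rfl, ht.1.trans ht.2⟩ ht ht.1
  simp only [hxy, sub_self] at this
  nlinarith [sq_nonneg (x t - y t)]

end Uniqueness

lemma antitoneOn_sq_div_two_mul_add (β γ : ℝ) :
    AntitoneOn (fun m => γ ^ 2 / (2 * m) + Real.sqrt 2 / 2 * β) (Ioi 0) :=
  fun _ hm _ _ hmn => add_le_add_left
    (div_le_div_of_nonneg_left (sq_nonneg γ) (by linarith [mem_Ioi.1 hm]) (by linarith)) _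

namespace IsSolODE

variable {T β γ : ℝ} {μ μ₁ μ₂ : ℝ → ℝ}

lemma hasDerivWithinAt_Ioo (hμ : IsSolODE T β γ μ) :
    ∀ s ∈ Ioo 0 T, HasDerivWithinAt μ (γ ^ 2 / (2 * μ s) + Real.sqrt 2 / 2 * β) (Ioo 0 T) s :=
  fun s hs => (hμ.2.2.2.2.2 s (Ioo_subset_Ioc_self hs)).mono Ioo_subset_Icc_self

theorem eqOn (h₁ : IsSolODE T β γ μ₁) (h₂ : IsSolODE T β γ μ₂) : EqOn μ₁ μ₂ (Icc 0 T) :=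
  eqOn_Icc_of_hasDerivWithinAt_of_antitoneOn (antitoneOn_sq_div_two_mul_add β γ) h₁.1 h₂.1
    (h₁.2.2.1.trans h₂.2.2.1.symm) (fun s hs => h₁.2.2.2.2.1 s (Ioo_subset_Ioc_self hs))
    (fun s hs => h₂.2.2.2.2.1 s (Ioo_subset_Ioc_self hs)) h₁.hasDerivWithinAt_Ioo
    h₂.hasDerivWithinAt_Ioo

lemma sq_mul_le_sq (hβ : 0 ≤ β) (hμ : IsSolODE T β γ μ) {s : ℝ} (hs : s ∈ Icc 0 T) :
    γ ^ 2 * s ≤ μ s ^ 2 := by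
  have hderiv := hμ.hasDerivWithinAt_Ioo
  obtain ⟨hcont, -, h0, -, hpos, -⟩ := hμ
  have hmono : MonotoneOn (fun s => μ s ^ 2 - γ ^ 2 * s) (Icc 0 T) := by
    refine monotoneOn_of_hasDerivWithinAt_nonneg (convex_Icc 0 T)
      ((hcont.pow 2).sub (by fun_prop)) (f' := fun s => Real.sqrt 2 * β * μ s)
      (fun t ht => ?_) fun t ht => ?_
    all_goals simp only [interior_Icc] at ht ⊢
    · have hμt := hpos t (Ioo_subset_Ioc_self ht)
      refine (((hderiv t ht).pow 2).sub
        ((hasDerivWithinAt_id t _).const_mul (γ ^ 2))).congr_deriv ?_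
      field_simp
      ring
    · exact mul_nonneg (by positivity) (hpos t (Ioo_subset_Ioc_self ht)).le
  simpa [h0] using hmono ⟨le_rfl, hs.1.trans hs.2⟩ hs hs.1

theorem lintegral_inv_lt_top (hβ : 0 ≤ β) (hγ : 0 < γ) (hμ : IsSolODE T β γ μ) :
    ∫⁻ s in Ioc 0 T, ENNReal.ofReal (1 / μ s) < ⊤ := by
  have hint : IntegrableOn (fun s : ℝ => γ⁻¹ * s ^ (-(1 / 2) : ℝ)) (Ioc 0 T) :=
    (intervalIntegrable_rpow' (by norm_num)).1.const_mul γ⁻¹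
  refine lt_of_le_of_lt (setLIntegral_mono (by fun_prop) fun s hs => ?_) hint.lintegral_lt_top
  have hroot : γ * Real.sqrt s ≤ μ s := by
    rw [← Real.sqrt_sq hγ.le, ← Real.sqrt_mul (sq_nonneg γ),
      Real.sqrt_le_left (hμ.2.2.2.2.1 s hs).le]
    exact hμ.sq_mul_le_sq hβ (Ioc_subset_Icc_self hs)
  rw [Real.rpow_neg hs.1.le, ← Real.sqrt_eq_rpow, ← mul_inv, one_div]
  exact ENNReal.ofReal_le_ofReal (inv_anti₀ (mul_pos hγ (Real.sqrt_pos.2 hs.1)) hroot)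

end IsSolODE

variable {T β γ : ℝ}

lemma isSolODE_linear (hβ : 0 < β) : IsSolODE T β 0 (fun s => Real.sqrt 2 / 2 * β * s) := by
  have hc : 0 < Real.sqrt 2 / 2 * β := by positivity
  refine ⟨by fun_prop, fun x _ y _ hxy => mul_lt_mul_of_pos_left hxy hc, by simp,
    fun s hs => mul_nonneg hc.le hs.1, fun s hs => mul_pos hc hs.1, fun s _ => ?_⟩
  simpa using (hasDerivWithinAt_id s _).const_mul (Real.sqrt 2 / 2 * β)

theorem exists_isSolODE_of_pos (hβ : 0 ≤ β) (hγ : 0 < γ) : ∃ μ, IsSolODE T β γ μ := by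
  have ha : 0 < γ ^ 2 / 2 := by positivity
  have hc : 0 ≤ Real.sqrt 2 / 2 * β := by positivity
  let e := (strictMono_levelTime ha hc).orderIsoOfSurjective _ (surjective_levelTime ha hc)
  have he0 : e.symm 0 = 0 := e.symm_apply_eq.2 levelTime_zero.symm
  have hpos : ∀ s ∈ Ioc 0 T, 0 < e.symm s := fun s hs => he0 ▸ e.symm.strictMono hs.1
  refine ⟨e.symm, e.symm.continuous.continuousOn, e.symm.strictMono.strictMonoOn _, he0,
    fun s hs => he0 ▸ e.symm.monotone hs.1, hpos, fun s hs => ?_⟩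
  have hinv := (hasDerivAt_levelTime ha hc (e.symm s)).of_local_left_inverse
    e.symm.continuous.continuousAt (invField_pos ha hc (hpos s hs).ne').ne'
    (Eventually.of_forall e.apply_symm_apply)
  rw [invField_of_nonneg (hpos s hs).le, inv_div] at hinv
  have hμs := (hpos s hs).ne'
  exact hinv.hasDerivWithinAt.congr_deriv (by field_simp)

theorem stmt_8_general (T β γ : ℝ) (hβ : 0 ≤ β) (hγ : 0 ≤ γ) (hβγ : 0 < β + γ) :
    (∃ μ : ℝ → ℝ, IsSolODE T β γ μ) ∧
    (∀ μ₁ μ₂ : ℝ → ℝ, IsSolODE T β γ μ₁ → IsSolODE T β γ μ₂ →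
      Set.EqOn μ₁ μ₂ (Set.Icc 0 T)) ∧
    (0 < γ → ∀ μ : ℝ → ℝ, IsSolODE T β γ μ →
      ∫⁻ s in Set.Ioc 0 T, ENNReal.ofReal (1 / μ s) < ⊤) := by
  refine ⟨?_, fun _ _ h₁ h₂ => h₁.eqOn h₂, fun hγ' _ hμ => hμ.lintegral_inv_lt_top hβ hγ'⟩
  rcases hγ.eq_or_lt with rfl | hγ'
  · exact ⟨_, isSolODE_linear (by linarith)⟩
  · exact exists_isSolODE_of_pos hβ hγ'

/-- The ODE (3.6)/(3.8): for `T > 0` and `β, γ ≥ 0` with `β + γ > 0`, there exists a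
solution of the singular ODE, any two solutions agree on `[0, T]`, and if `γ > 0` then
`s ↦ 1/μ(s)` has finite Lebesgue integral on `(0, T]`. -/
theorem stmt_8 (T β γ : ℝ) (hT : 0 < T) (hβ : 0 ≤ β) (hγ : 0 ≤ γ) (hβγ : 0 < β + γ) :
    (∃ μ : ℝ → ℝ, IsSolODE T β γ μ) ∧
    (∀ μ₁ μ₂ : ℝ → ℝ, IsSolODE T β γ μ₁ → IsSolODE T β γ μ₂ →
      Set.EqOn μ₁ μ₂ (Set.Icc 0 T)) ∧
    (0 < γ → ∀ μ : ℝ → ℝ, IsSolODE T β γ μ →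
      ∫⁻ s in Set.Ioc 0 T, ENNReal.ofReal (1 / μ s) < ⊤) :=
  stmt_8_general T β γ hβ hγ hβγ
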